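/- Let M ≤ N be positive integers and let c > 0 be a real constant. Then every matrix Φ ∈ ℂ^{M×N} satisfies ‖Φᴴ·Φ − c·I_N‖_F² ≥ (N−M)·c², and equality holds if and only if Φ·Φᴴ = c·I_M, i.e., if and only if the rows of Φ are mutually orthogonal and all have squared Euclidean norm c. -/

import Mathlib

/-!
Both `Φᴴ Φ` and `Φ Φᴴ` are Hermitian, so `‖A - c I‖_F² = tr(A²) - 2c tr A + c² · size` for each
of them. Cycling the trace gives `tr(Φᴴ Φ) = tr(Φ Φᴴ)` and `tr((Φᴴ Φ)²) = tr((Φ Φᴴ)²)`, hence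
`‖Φᴴ Φ - c I_N‖_F² = ‖Φ Φᴴ - c I_M‖_F² + (N - M) c²`: the bound is the nonnegativity of the
first term, and equality is its vanishing.
-/

open Matrix

/-- Squared Frobenius norm of a complex matrix. -/
noncomputable def frobSq {m n : Type*} [Fintype m] [Fintype n] (X : Matrix m n ℂ) : ℝ :=
  ∑ i, ∑ j, ‖X i j‖ ^ 2

section FrobSq

variable {m n : Type*} [Fintype m] [Fintype n]

theorem ofReal_frobSq (X : Matrix m n ℂ) : (frobSq X : ℂ) = trace (Xᴴ * X) := by
  simp only [frobSq, trace, diag, mul_apply, conjTranspose_apply, Complex.ofReal_sum,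
    Complex.ofReal_pow, RCLike.star_def, Complex.conj_mul']
  exact Finset.sum_comm

theorem frobSq_nonneg (X : Matrix m n ℂ) : 0 ≤ frobSq X :=
  Finset.sum_nonneg fun _ _ => Finset.sum_nonneg fun _ _ => sq_nonneg _

open ComplexOrder in
theorem frobSq_eq_zero_iff {X : Matrix m n ℂ} : frobSq X = 0 ↔ X = 0 := by
  rw [← Complex.ofReal_inj, ofReal_frobSq, Complex.ofReal_zero,
    trace_conjTranspose_mul_self_eq_zero_iff]

end FrobSq

theorem Matrix.IsHermitian.trace_conjTranspose_mul_self_sub_smul_one {m : Type*} [Fintype m]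
    [DecidableEq m] {A : Matrix m m ℂ} (hA : A.IsHermitian) (c : ℝ) :
    trace ((A - (c : ℂ) • 1)ᴴ * (A - (c : ℂ) • 1)) =
      trace (A * A) - 2 * c * trace A + (c : ℂ) ^ 2 * Fintype.card m := by
  rw [conjTranspose_sub, hA.eq, conjTranspose_smul, conjTranspose_one, RCLike.star_def,
    Complex.conj_ofReal]
  simp only [sub_mul, mul_sub, trace_sub, smul_mul_assoc, mul_smul_comm, one_mul,
    Matrix.mul_one, trace_smul, trace_one, smul_eq_mul]
  ring

theorem frobSq_conjTranspose_mul_self_sub_smul_one {m n : Type*} [Fintype m] [Fintype n]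
    [DecidableEq m] [DecidableEq n] (Φ : Matrix m n ℂ) (c : ℝ) :
    frobSq (Φᴴ * Φ - (c : ℂ) • 1) =
      frobSq (Φ * Φᴴ - (c : ℂ) • 1) + ((Fintype.card n : ℝ) - Fintype.card m) * c ^ 2 := by
  have trace_sq : trace (Φᴴ * Φ * (Φᴴ * Φ)) = trace (Φ * Φᴴ * (Φ * Φᴴ)) := by
    rw [Matrix.mul_assoc, trace_mul_comm]
    simp only [Matrix.mul_assoc]
  apply Complex.ofReal_injective
  push_cast
  rw [ofReal_frobSq, ofReal_frobSq,
    (isHermitian_conjTranspose_mul_self Φ).trace_conjTranspose_mul_self_sub_smul_one,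
    (isHermitian_mul_conjTranspose_self Φ).trace_conjTranspose_mul_self_sub_smul_one,
    trace_sq, trace_mul_comm Φᴴ Φ]
  ring

theorem stmt7_general (M N : ℕ) (hMN : M ≤ N) (c : ℝ)
    (Φ : Matrix (Fin M) (Fin N) ℂ) :
    ((N - M : ℕ) : ℝ) * c ^ 2 ≤ frobSq (Φᴴ * Φ - (c : ℂ) • 1) ∧
    (frobSq (Φᴴ * Φ - (c : ℂ) • 1) = ((N - M : ℕ) : ℝ) * c ^ 2 ↔
      Φ * Φᴴ = (c : ℂ) • 1) := by
  have key : frobSq (Φᴴ * Φ - (c : ℂ) • 1) =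
      frobSq (Φ * Φᴴ - (c : ℂ) • 1) + ((N - M : ℕ) : ℝ) * c ^ 2 := by
    rw [frobSq_conjTranspose_mul_self_sub_smul_one, Fintype.card_fin, Fintype.card_fin,
      Nat.cast_sub hMN]
  rw [key, add_eq_right, frobSq_eq_zero_iff, sub_eq_zero]
  exact ⟨le_add_of_nonneg_left (frobSq_nonneg _), Iff.rfl⟩

/-- Claim after Corollary 1: every `Φ ∈ ℂ^{M×N}` satisfies
`‖Φᴴ·Φ − c·I_N‖_F² ≥ (N−M)·c²`, with equality iff `Φ·Φᴴ = c·I_M`,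
i.e., iff the rows of `Φ` are mutually orthogonal with squared norm `c`. -/
theorem stmt7 (M N : ℕ) (hM : 0 < M) (hMN : M ≤ N) (c : ℝ) (hc : 0 < c)
    (Φ : Matrix (Fin M) (Fin N) ℂ) :
    ((N - M : ℕ) : ℝ) * c ^ 2 ≤ frobSq (Φᴴ * Φ - (c : ℂ) • 1) ∧
    (frobSq (Φᴴ * Φ - (c : ℂ) • 1) = ((N - M : ℕ) : ℝ) * c ^ 2 ↔
      Φ * Φᴴ = (c : ℂ) • 1) :=
  stmt7_general M N hMN c Φ
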